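/- arXiv:1908.03566 — 3 statements merged into one kernel-verified Lean document; each statement's English description precedes it below -/
import Mathlib

section
/- If for all α ∈ [0,1], the true positive rate satisfies TPR ≤ e^ε·α + δ when FPR = α, then the membership advantage TPR − FPR is bounded above by 1 − e^{−ε} + δ·e^{−ε}. -/
theorem advantage_bound (ε δ fpr tpr : ℝ)
    (hε : 0 ≤ ε) (hδ0 : 0 ≤ δ) (hδ1 : δ ≤ 1)
    (hf0 : 0 ≤ fpr) (hf1 : fpr ≤ 1) (ht0 : 0 ≤ tpr) (ht1 : tpr ≤ 1)
    (hdp : tpr ≤ Real.exp ε * fpr + δ) :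
    tpr - fpr ≤ 1 - Real.exp (-ε) + δ * Real.exp (-ε) := by
  have h1 : 1 ≤ Real.exp ε := Real.one_le_exp hε
  have h2 : Real.exp (-ε) * Real.exp ε = 1 := by
    rw [← Real.exp_add]; simp
  have h3 : 0 < Real.exp (-ε) := Real.exp_pos _
  rcases le_total fpr (Real.exp (-ε) * (1 - δ)) with h | h
  · nlinarith
  · nlinarith
end

section
/- If a mechanism satisfies the (ε,δ)-DP hypothesis-testing bound TPR ≤ min(e^ε·FPR + δ, 1) and also by symmetry 1 − FPR ≤ e^ε·(1 − TPR) + δ, then TPR − FPR ≤ (e^ε − 1 + 2δ)/(e^ε + 1). -/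
theorem two_sided_advantage_bound (ε δ fpr tpr : ℝ)
    (hε : 0 ≤ ε) (hδ0 : 0 ≤ δ) (hδ1 : δ ≤ 1)
    (hf0 : 0 ≤ fpr) (hf1 : fpr ≤ 1) (ht0 : 0 ≤ tpr) (ht1 : tpr ≤ 1)
    (hdp1 : tpr ≤ min (Real.exp ε * fpr + δ) 1)
    (hdp2 : 1 - fpr ≤ Real.exp ε * (1 - tpr) + δ) :
    tpr - fpr ≤ (Real.exp ε - 1 + 2 * δ) / (Real.exp ε + 1) := by
  have h1 : tpr ≤ Real.exp ε * fpr + δ := (le_min_iff.mp hdp1).1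
  have hpos : (0:ℝ) < Real.exp ε + 1 := by positivity
  rw [le_div_iff₀ hpos]
  nlinarith [Real.one_le_exp hε]
end

section
/- Under the two-sided DP condition P(S) ≤ e^ε·Q(S) + δ and Q(S) ≤ e^ε·P(S) + δ for all measurable S, the total variation distance between P and Q is at most (e^ε − 1 + 2δ)/(e^ε + 1). -/
open MeasureTheory

theorem dp_total_variation_bound {Ω : Type*} [MeasurableSpace Ω]
    (P Q : Measure Ω) [IsProbabilityMeasure P] [IsProbabilityMeasure Q]
    (ε δ : ℝ) (hε : 0 ≤ ε) (hδ0 : 0 ≤ δ) (hδ1 : δ ≤ 1)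
    (hdp1 : ∀ S : Set Ω, MeasurableSet S →
      (P S).toReal ≤ Real.exp ε * (Q S).toReal + δ)
    (hdp2 : ∀ S : Set Ω, MeasurableSet S →
      (Q S).toReal ≤ Real.exp ε * (P S).toReal + δ) :
    ⨆ S : {S : Set Ω // MeasurableSet S}, |(P S.1).toReal - (Q S.1).toReal| ≤
      (Real.exp ε - 1 + 2 * δ) / (Real.exp ε + 1) := by
  have hexp : 1 ≤ Real.exp ε := Real.one_le_exp hε
  have hpos : 0 < Real.exp ε + 1 := by linarith
  haveI : Nonempty {S : Set Ω // MeasurableSet S} := ⟨⟨∅, MeasurableSet.empty⟩⟩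
  apply ciSup_le
  rintro ⟨S, hS⟩
  have hPc : (P Sᶜ).toReal = 1 - (P S).toReal := by
    rw [measure_compl hS (measure_ne_top _ _),
      ENNReal.toReal_sub_of_le (measure_mono (Set.subset_univ _)) (measure_ne_top _ _)]
    simp
  have hQc : (Q Sᶜ).toReal = 1 - (Q S).toReal := by
    rw [measure_compl hS (measure_ne_top _ _),
      ENNReal.toReal_sub_of_le (measure_mono (Set.subset_univ _)) (measure_ne_top _ _)]
    simp
  have h1 := hdp1 S hS
  have h2 := hdp2 S hS
  have h1c := hdp1 Sᶜ hS.compl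
  have h2c := hdp2 Sᶜ hS.compl
  rw [hPc, hQc] at h1c h2c
  rw [abs_sub_le_iff]
  constructor <;> (rw [le_div_iff₀ hpos]; nlinarith)
end
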